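/- For integers t ≤ i ≤ k with x ≥ 2k a real number and t ≥ 0, one has C(x, i−t)/C(x, k−t) ≥ (e·k)^{−t} · C(x, i)/C(x, k). -/

import Mathlib

/-- The generalized binomial coefficient `C(x, j) = x(x-1)⋯(x-j+1)/j!`. -/
noncomputable def rchoose (x : ℝ) (j : ℕ) : ℝ :=
  (∏ i ∈ Finset.range j, (x - i)) / (Nat.factorial j : ℝ)

/-!
Writing `C(x, b) = C(x, a) · a!/b! · ∏_{a ≤ j < b} (x - j)`, the two ratios differ by the
factorials, where `k!/(k-t)! ≤ kᵗ`, and by the products over the same number `k - i ≤ k` of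
factors: shifting the index window down by `t` turns each factor `x - j ≥ k` into
`x - j + t ≤ (x - j) e^{t/k}`, which costs at most `eᵗ` in total.
-/

open Finset Nat

theorem factorial_le_factorial_sub_mul_pow {k t : ℕ} (h : t ≤ k) : k ! ≤ (k - t)! * k ^ t :=
  calc k ! = (k - t)! * k.descFactorial t := (factorial_mul_descFactorial h).symm
    _ ≤ (k - t)! * k ^ t := Nat.mul_le_mul_left _ (descFactorial_le_pow k t)

theorem prod_add_le_exp_mul_prod {ι : Type*} (s : Finset ι) (y : ι → ℝ) {c t : ℝ}
    (hc : 0 < c) (ht : 0 ≤ t) (hs : (#s : ℝ) ≤ c) (hy : ∀ j ∈ s, c ≤ y j) :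
    ∏ j ∈ s, (y j + t) ≤ Real.exp t * ∏ j ∈ s, y j := by
  have hfactor : ∀ j ∈ s, y j + t ≤ y j * Real.exp (t / c) := fun j hj => by
    have hyj : 0 < y j := hc.trans_le (hy j hj)
    have hle : t ≤ y j * (t / c) := by
      rw [mul_div_assoc', le_div_iff₀ hc]
      nlinarith [hy j hj]
    calc y j + t ≤ y j * (t / c + 1) := by linarith
      _ ≤ y j * Real.exp (t / c) := by gcongr; exact Real.add_one_le_exp _
  have hexp : Real.exp (t / c) ^ #s ≤ Real.exp t := by
    rw [← Real.exp_nat_mul, Real.exp_le_exp, mul_div_assoc', div_le_iff₀ hc, mul_comm]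
    gcongr
  calc ∏ j ∈ s, (y j + t)
      ≤ ∏ j ∈ s, (y j * Real.exp (t / c)) :=
        prod_le_prod (fun j hj => by linarith [hy j hj]) hfactor
    _ = Real.exp (t / c) ^ #s * ∏ j ∈ s, y j := by rw [prod_mul_distrib, prod_const, mul_comm]
    _ ≤ Real.exp t * ∏ j ∈ s, y j := by
        gcongr
        exact prod_nonneg fun j hj => hc.le.trans (hy j hj)

theorem rchoose_pos {x : ℝ} {n : ℕ} (h : (n : ℝ) ≤ x) : 0 < rchoose x n := by
  refine div_pos (prod_pos fun m hm => ?_) (by positivity)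
  have : (m : ℝ) + 1 ≤ n := by exact_mod_cast mem_range.mp hm
  linarith

theorem rchoose_div_rchoose_of_le {x : ℝ} {a b : ℕ} (hab : a ≤ b) (hb : rchoose x b ≠ 0) :
    rchoose x a / rchoose x b = b ! / (a ! * ∏ j ∈ range (b - a), (x - (a + j : ℕ))) := by
  have hsplit : ∏ m ∈ range b, (x - m) =
      (∏ m ∈ range a, (x - m)) * ∏ j ∈ range (b - a), (x - (a + j : ℕ)) := by
    rw [← prod_range_add, Nat.add_sub_cancel' hab]
  rw [rchoose, hsplit] at hb
  have ha : ∏ m ∈ range a, (x - m) ≠ 0 := left_ne_zero_of_mul (div_ne_zero_iff.mp hb).1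
  have hab' : ∏ j ∈ range (b - a), (x - (a + j : ℕ)) ≠ 0 :=
    right_ne_zero_of_mul (div_ne_zero_iff.mp hb).1
  rw [rchoose, rchoose, hsplit]
  field_simp

theorem rchoose_sub_div_rchoose_sub {x : ℝ} {t i k : ℕ} (hti : t ≤ i) (hik : i ≤ k)
    (hk : rchoose x (k - t) ≠ 0) :
    rchoose x (i - t) / rchoose x (k - t) =
      (k - t)! / ((i - t)! * ∏ j ∈ range (k - i), (x - (i + j : ℕ) + t)) := by
  rw [rchoose_div_rchoose_of_le (by omega) hk, show k - t - (i - t) = k - i by omega]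
  congr 2
  refine prod_congr rfl fun j _ => ?_
  simp only [Nat.cast_add, Nat.cast_sub hti]
  ring

/-- For naturals `t ≤ i ≤ k` and real `x ≥ 2k`:
`C(x, i-t)/C(x, k-t) ≥ (e k)^{-t} C(x, i)/C(x, k)`. -/
theorem stmt_16 (t i k : ℕ) (x : ℝ) (hti : t ≤ i) (hik : i ≤ k)
    (hx : 2 * (k : ℝ) ≤ x) :
    rchoose x (i - t) / rchoose x (k - t) ≥
      (rchoose x i / rchoose x k) / (Real.exp 1 * (k : ℝ)) ^ t := by
  obtain rfl | hk := Nat.eq_zero_or_pos k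
  · obtain rfl : i = 0 := by omega
    obtain rfl : t = 0 := by omega
    simp
  have hkR : (0 : ℝ) < k := by exact_mod_cast hk
  have hy : ∀ j ∈ range (k - i), (k : ℝ) ≤ x - (i + j : ℕ) := fun j hj => by
    have : ((i + j : ℕ) : ℝ) + 1 ≤ k := by exact_mod_cast (by simp at hj; omega : i + j + 1 ≤ k)
    linarith
  have hA : 0 < ∏ j ∈ range (k - i), (x - (i + j : ℕ)) :=
    prod_pos fun j hj => hkR.trans_le (hy j hj)
  have hB : 0 < ∏ j ∈ range (k - i), (x - (i + j : ℕ) + t) :=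
    prod_pos fun j hj => by linarith [hy j hj]
  have hfact : (k ! * (i - t)! : ℝ) ≤ (k - t)! * k ^ t * i ! := by
    exact_mod_cast Nat.mul_le_mul (factorial_le_factorial_sub_mul_pow (hti.trans hik))
      (factorial_le (Nat.sub_le i t))
  rw [rchoose_sub_div_rchoose_sub hti hik
      (rchoose_pos ((Nat.cast_le.mpr (Nat.sub_le k t)).trans (by linarith))).ne',
    rchoose_div_rchoose_of_le hik (rchoose_pos (by linarith)).ne', ge_iff_le, div_div,
    div_le_div_iff₀ (by positivity) (by positivity)]
  calc _ = (k ! * (i - t)! : ℝ) * ∏ j ∈ range (k - i), (x - (i + j : ℕ) + t) := by ring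
    _ ≤ ((k - t)! * k ^ t * i !) * (Real.exp t * ∏ j ∈ range (k - i), (x - (i + j : ℕ))) := by
        gcongr
        exact prod_add_le_exp_mul_prod _ _ hkR t.cast_nonneg (by simp) hy
    _ = _ := by rw [mul_pow, ← Real.exp_nat_mul, mul_one]; ring
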